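/- arXiv:0706.2789 — 2 statements merged into one kernel-verified Lean document; each statement's English description precedes it below -/
import Mathlib

section
/- Let E be a finite-dimensional real vector space and Ω an alternating bilinear form on E. For every subspace F ⊆ E, the image of F under the flat map equals the annihilator of the Ω-orthogonal of F, i.e. ♭_Ω(F) = (F^⊥)⁰ as subspaces of the dual space E*. -/
open Module

/-- The `Ω`-orthogonal of a subspace `F`: all `e` with `Ω e f = 0` for every `f ∈ F`. -/
def omegaPerp {E : Type*} [AddCommGroup E] [Module ℝ E]
    (Ω : LinearMap.BilinForm ℝ E) (F : Submodule ℝ E) : Submodule ℝ E where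
  carrier := {e | ∀ f ∈ F, Ω e f = 0}
  add_mem' := by
    intro a b ha hb f hf
    simp [ha f hf, hb f hf]
  zero_mem' := by
    intro f hf
    simp
  smul_mem' := by
    intro c a ha f hf
    simp [ha f hf]

/-- `Ω.orthogonal F` tests `F` in the first slot, `omegaPerp Ω F` in the second; reflexivity
identifies them. -/
theorem omegaPerp_eq_orthogonal {E : Type*} [AddCommGroup E] [Module ℝ E]
    {Ω : LinearMap.BilinForm ℝ E} (hΩ : Ω.IsRefl) (F : Submodule ℝ E) :
    omegaPerp Ω F = Ω.orthogonal F := by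
  ext e
  exact forall₂_congr fun f _ ↦ hΩ.eq_iff

/-- For a finite-dimensional real vector space `E`, an alternating bilinear form `Ω` on `E`
and a subspace `F ⊆ E`, the image of `F` under the flat map `♭_Ω : e ↦ Ω(e,·)` equals the
annihilator of the `Ω`-orthogonal of `F` in the dual space `E*`. -/
theorem map_flat_eq_dualAnnihilator_omegaPerp {E : Type*} [AddCommGroup E] [Module ℝ E]
    [FiniteDimensional ℝ E] (Ω : LinearMap.BilinForm ℝ E) (hΩ : Ω.IsAlt)
    (F : Submodule ℝ E) :
    Submodule.map (Ω : E →ₗ[ℝ] Module.Dual ℝ E) F = (omegaPerp Ω F).dualAnnihilator := by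
  rw [omegaPerp_eq_orthogonal hΩ.isRefl,
    ← LinearMap.BilinForm.toLin_restrict_range_dualCoannihilator_eq_orthogonal,
    Subspace.dualCoannihilator_dualAnnihilator_eq, LinearMap.range_domRestrict]
end

section
/- Let r, φ ∈ ℝ and set k₁ = r cos φ and k₂ = r sin φ. Let θ : ℝ → ℝ be twice differentiable and p₃, p₄, p₅ : ℝ → ℝ differentiable, with y¹(t) := cos θ(t), y²(t) := sin θ(t), p₅(t) = θ̇(t), p₃(t) = k₂ − y²(t), p₄(t) = y¹(t) − k₁, and suppose ṗ₅(t) = y¹(t) p₃(t) + y²(t) p₄(t) for all t. Then θ satisfies the pendulum equation θ̈(t) = −r sin(θ(t) − φ) for all t. -/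
open Real

/-- In the plate-ball vakonomic problem with `c = 0` and `Ω = 0`, writing
`y¹ = cos θ`, `y² = sin θ`, `p₅ = θ̇`, `p₃ = k₂ − y²`, `p₄ = y¹ − k₁` with
`k₁ = r cos φ`, `k₂ = r sin φ`, the equation `ṗ₅ = y¹ p₃ + y² p₄` implies that the
angle `θ` satisfies the pendulum equation `θ̈ = −r sin(θ − φ)`. -/
theorem plateBall_pendulum (r φ : ℝ) (k₁ k₂ : ℝ)
    (hk₁ : k₁ = r * Real.cos φ) (hk₂ : k₂ = r * Real.sin φ)
    (θ p₃ p₄ p₅ : ℝ → ℝ)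
    (hθ : Differentiable ℝ θ) (hθ' : Differentiable ℝ (deriv θ))
    (hp₃ : Differentiable ℝ p₃) (hp₄ : Differentiable ℝ p₄)
    (hp₅ : Differentiable ℝ p₅)
    (hp₅def : ∀ t : ℝ, p₅ t = deriv θ t)
    (hp₃def : ∀ t : ℝ, p₃ t = k₂ - Real.sin (θ t))
    (hp₄def : ∀ t : ℝ, p₄ t = Real.cos (θ t) - k₁)
    (heq5 : ∀ t : ℝ, deriv p₅ t = Real.cos (θ t) * p₃ t + Real.sin (θ t) * p₄ t) :
    ∀ t : ℝ, deriv (deriv θ) t = -r * Real.sin (θ t - φ) := by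
  intro t
  have hfun : p₅ = deriv θ := funext hp₅def
  have h := heq5 t
  rw [hfun] at h
  rw [h, hp₃def, hp₄def, hk₁, hk₂, Real.sin_sub]
  ring
end
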